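/- Let M ≥ 1, n ≥ 1, k > 0, α_0,...,α_M > 0 with α = Σ_{d=0}^M α_d and c_1 = (1/α)Σ_{d=0}^M d·α_d. Fix a probability vector t = (t_0,...,t_M) on {0,...,M}, and let (n_0,...,n_M) ∼ Multinomial(n, t) with Z = (1/n)Σ_{d=0}^M d·n_d. Define the posterior Bayes action a_X = (α·c_1 + n·Z)/(α + n). Then E_{(n_0,...,n_M)}[Σ_{d=0}^M t_d · k·(d − a_X)²] = k·{ (1 + n/(α+n)²)·Σ_{d=0}^M d²·t_d + (2αn·c_1/(α+n)² − 2α·c_1/(α+n))·Σ_{d=0}^M d·t_d + (n(n−1)/(α+n)² − 2n/(α+n))·(Σ_{d=0}^M d·t_d)² + α²·c_1²/(α+n)² }. -/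

import Mathlib

/-!
Since `t` sums to one, the inner risk of an action `a` is `k (μ₂ - 2 a μ₁ + a²)` with
`μⱼ = ∑ dʲ t_d`, and `a_X` is affine in the linear statistic `S = ∑ d n_d = n Z`. So the expected
risk only involves the first two moments of `S` under the multinomial law,
`E S = n μ₁` and `E S² = n (n - 1) μ₁² + n μ₂`. Both follow from the shift identity
`E_{m+1}[n_d F(n)] = (m + 1) t_d E_m[F(n + e_d)]`, which comes from the recursion
`(c_d + 1) · multinomial (c + e_d) = (|c| + 1) · multinomial c`.
-/

open Finset

theorem sum_mul_sub_sq {ι R : Type*} [Fintype ι] [CommRing R] (t v : ι → R) (ht : ∑ i, t i = 1)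
    (a : R) :
    ∑ i, t i * (v i - a) ^ 2 = ∑ i, v i ^ 2 * t i - 2 * a * ∑ i, v i * t i + a ^ 2 := by
  have h : ∀ i, t i * (v i - a) ^ 2 = v i ^ 2 * t i - 2 * a * (v i * t i) + a ^ 2 * t i :=
    fun i => by ring
  simp only [h, sum_add_distrib, sum_sub_distrib, ← mul_sum, ht, mul_one]

section Multinomial

variable {ι : Type*} [DecidableEq ι]

theorem Nat.add_one_mul_multinomial_add_single {s : Finset ι} {d : ι} (hd : d ∈ s) (c : ι → ℕ) :
    (c d + 1) * Nat.multinomial s (c + Pi.single d 1) =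
      (∑ i ∈ s, c i + 1) * Nat.multinomial s c := by
  have hd' : d ∉ s.erase d := notMem_erase d s
  have hrest : Nat.multinomial (s.erase d) (c + Pi.single d 1) = Nat.multinomial (s.erase d) c :=
    Nat.multinomial_congr fun i hi => by simp [(mem_erase.1 hi).1]
  have hsum : ∑ i ∈ s.erase d, (c + Pi.single d 1 : ι → ℕ) i = ∑ i ∈ s.erase d, c i :=
    sum_congr rfl fun i hi => by simp [(mem_erase.1 hi).1]
  rw [← insert_erase hd, Nat.multinomial_insert hd', Nat.multinomial_insert hd', hrest, hsum,
    sum_insert hd']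
  simp only [Pi.add_apply, Pi.single_eq_same]
  rw [show c d + 1 + ∑ i ∈ s.erase d, c i = c d + ∑ i ∈ s.erase d, c i + 1 by ring,
    ← mul_assoc, mul_comm (c d + 1), ← Nat.add_one_mul_choose_eq]
  ring

theorem sum_piAntidiag_add_one_eq_sum_add_single {M : Type*} [AddCommMonoid M] {s : Finset ι}
    {d : ι} (hd : d ∈ s) (m : ℕ) {g : (ι → ℕ) → M} (hg : ∀ c, c d = 0 → g c = 0) :
    ∑ c ∈ piAntidiag s (m + 1), g c = ∑ c ∈ piAntidiag s m, g (c + Pi.single d 1) := by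
  symm
  refine sum_bij_ne_zero (fun c _ _ => c + Pi.single d 1) ?_ ?_ ?_ fun _ _ _ => rfl
  · intro c hc _
    simp only [mem_piAntidiag] at hc ⊢
    refine ⟨by simp [sum_add_distrib, hc.1, hd], fun i hi => ?_⟩
    by_cases h : i = d
    · exact h ▸ hd
    · exact hc.2 i (by simpa [h] using hi)
  · intro a _ _ b _ _ h
    exact add_right_cancel h
  · intro b hb hgb
    have hbd : b d ≠ 0 := fun h => hgb (hg b h)
    have hb_eq : b - Pi.single d 1 + Pi.single d 1 = b := by
      ext i
      by_cases h : i = d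
      · subst h; simp; omega
      · simp [h]
    refine ⟨b - Pi.single d 1, ?_, by rwa [hb_eq], hb_eq⟩
    simp only [mem_piAntidiag] at hb ⊢
    refine ⟨?_, fun i hi => hb.2 i fun h => hi (by simp [h])⟩
    change ∑ i ∈ s, (b - Pi.single d 1 : ι → ℕ) i = m
    have := congrArg (fun f => ∑ i ∈ s, f i) hb_eq
    simp only [Pi.add_apply, sum_add_distrib, hb.1, sum_pi_single', hd, if_true] at this
    omega

variable [Fintype ι] {R : Type*} [CommRing R]

theorem prod_pow_add_single {M : Type*} [CommMonoid M] (t : ι → M) (c : ι → ℕ) (d : ι) :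
    ∏ i, t i ^ (c + Pi.single d 1 : ι → ℕ) i = t d * ∏ i, t i ^ c i := by
  simp only [Pi.add_apply, pow_add, prod_mul_distrib, Pi.single_apply, pow_ite, pow_one, pow_zero,
    prod_ite_eq', mem_univ, if_true, mul_comm]

def multinomialWeight (t : ι → R) (c : ι → ℕ) : R :=
  Nat.multinomial univ c * ∏ i, t i ^ c i

def multinomialExpect (t : ι → R) (m : ℕ) (F : (ι → ℕ) → R) : R :=
  ∑ c ∈ piAntidiag univ m, multinomialWeight t c * F c

theorem add_one_mul_multinomialWeight_add_single (t : ι → R) {m : ℕ} {c : ι → ℕ}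
    (hc : ∑ i, c i = m) (d : ι) :
    ((c d : R) + 1) * multinomialWeight t (c + Pi.single d 1) =
      (m + 1) * t d * multinomialWeight t c := by
  have h := congrArg (Nat.cast : ℕ → R) (Nat.add_one_mul_multinomial_add_single (mem_univ d) c)
  push_cast [hc] at h
  rw [multinomialWeight, multinomialWeight, prod_pow_add_single]
  linear_combination (t d * ∏ i, t i ^ c i) * h

theorem multinomialExpect_add (t : ι → R) (m : ℕ) (F G : (ι → ℕ) → R) :
    multinomialExpect t m (fun c => F c + G c) =
      multinomialExpect t m F + multinomialExpect t m G := by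
  simp only [multinomialExpect, mul_add, sum_add_distrib]

theorem multinomialExpect_sum {κ : Type*} (t : ι → R) (m : ℕ) (s : Finset κ)
    (F : κ → (ι → ℕ) → R) :
    multinomialExpect t m (fun c => ∑ j ∈ s, F j c) = ∑ j ∈ s, multinomialExpect t m (F j) := by
  simp only [multinomialExpect, mul_sum]
  exact sum_comm

theorem multinomialExpect_const_mul (t : ι → R) (m : ℕ) (a : R) (F : (ι → ℕ) → R) :
    multinomialExpect t m (fun c => a * F c) = a * multinomialExpect t m F := by
  simp only [multinomialExpect, mul_sum, mul_left_comm]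

theorem multinomialExpect_const {t : ι → R} (ht : ∑ i, t i = 1) (m : ℕ) (a : R) :
    multinomialExpect t m (fun _ => a) = a := by
  have h := sum_pow_eq_sum_piAntidiag univ t m
  rw [ht, one_pow] at h
  rw [multinomialExpect, ← sum_mul]
  simp [multinomialWeight, ← h]

theorem multinomialExpect_count_mul (t : ι → R) (m : ℕ) (d : ι) (F : (ι → ℕ) → R) :
    multinomialExpect t (m + 1) (fun c => c d * F c) =
      (m + 1) * t d * multinomialExpect t m (fun c => F (c + Pi.single d 1)) := by
  rw [multinomialExpect, multinomialExpect, mul_sum,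
    sum_piAntidiag_add_one_eq_sum_add_single (mem_univ d) m fun c hc => by simp [hc]]
  refine sum_congr rfl fun c hc => ?_
  have h := add_one_mul_multinomialWeight_add_single t (mem_piAntidiag.1 hc).1 d
  simp only [Pi.add_apply, Pi.single_eq_same]
  push_cast
  linear_combination F (c + Pi.single d 1) * h

theorem multinomialExpect_linear_mul (t v : ι → R) (m : ℕ) (F : (ι → ℕ) → R) :
    multinomialExpect t (m + 1) (fun c => (∑ d, v d * c d) * F c) =
      (m + 1) * ∑ d, v d * t d * multinomialExpect t m (fun c => F (c + Pi.single d 1)) := by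
  have h : ∀ c : ι → ℕ, (∑ d, v d * c d) * F c = ∑ d, v d * (c d * F c) := fun c => by
    simp only [sum_mul, mul_assoc]
  simp only [h, multinomialExpect_sum, multinomialExpect_const_mul, multinomialExpect_count_mul,
    mul_sum]
  exact sum_congr rfl fun d _ => by ring

theorem multinomialExpect_linear {t : ι → R} (ht : ∑ i, t i = 1) (v : ι → R) (m : ℕ) :
    multinomialExpect t m (fun c => ∑ d, v d * c d) = m * ∑ d, v d * t d := by
  cases m with
  | zero => simp [multinomialExpect]
  | succ m =>
    simpa [multinomialExpect_const ht] using multinomialExpect_linear_mul t v m fun _ => 1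

theorem multinomialExpect_linear_sq {t : ι → R} (ht : ∑ i, t i = 1) (v : ι → R) (m : ℕ) :
    multinomialExpect t m (fun c => (∑ d, v d * c d) ^ 2) =
      m * (m - 1) * (∑ d, v d * t d) ^ 2 + m * ∑ d, v d ^ 2 * t d := by
  cases m with
  | zero => simp [multinomialExpect]
  | succ m =>
    have hshift : ∀ (c : ι → ℕ) (d : ι),
        ∑ e, v e * ((c + Pi.single d 1 : ι → ℕ) e : R) = ∑ e, v e * c e + v d :=
      fun c d => by simp [mul_add, sum_add_distrib, Pi.single_apply]
    simp only [sq, multinomialExpect_linear_mul, hshift, multinomialExpect_add,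
      multinomialExpect_linear ht, multinomialExpect_const ht]
    have h : ∀ d, v d * t d * (m * ∑ e, v e * t e + v d) =
        (m * ∑ e, v e * t e) * (v d * t d) + v d * v d * t d := fun d => by ring
    simp only [h, sum_add_distrib, ← mul_sum]
    push_cast
    ring

theorem multinomialExpect_quadratic {t : ι → R} (ht : ∑ i, t i = 1) (v : ι → R) (m : ℕ)
    (a₀ a₁ a₂ : R) :
    multinomialExpect t m (fun c => a₀ + a₁ * ∑ d, v d * c d + a₂ * (∑ d, v d * c d) ^ 2) =
      a₀ + a₁ * (m * ∑ d, v d * t d) +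
        a₂ * (m * (m - 1) * (∑ d, v d * t d) ^ 2 + m * ∑ d, v d ^ 2 * t d) := by
  rw [multinomialExpect_add, multinomialExpect_add, multinomialExpect_const ht,
    multinomialExpect_const_mul, multinomialExpect_const_mul, multinomialExpect_linear ht,
    multinomialExpect_linear_sq ht]

end Multinomial

theorem expected_risk_posterior_action_given_t_general (M n : ℕ) (hn : 1 ≤ n)
    (k : ℝ)
    (α : Fin (M + 1) → ℝ) (hα : ∀ d, 0 < α d)
    (A c1 : ℝ) (hA : A = ∑ d, α d)
    (t : Fin (M + 1) → ℝ) (htsum : ∑ d, t d = 1)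
    (P : (Fin (M + 1) → ℕ) → ℝ)
    (hP : ∀ c, P c = (Nat.multinomial Finset.univ c : ℝ) *
      ∏ d : Fin (M + 1), t d ^ c d)
    (Z : (Fin (M + 1) → ℕ) → ℝ)
    (hZ : ∀ c, Z c = (1 / (n : ℝ)) * ∑ d : Fin (M + 1), ((d : ℕ) : ℝ) * (c d : ℝ))
    (aX : (Fin (M + 1) → ℕ) → ℝ)
    (haX : ∀ c, aX c = (A * c1 + n * Z c) / (A + n)) :
    ∑ c ∈ Finset.Nat.antidiagonalTuple (M + 1) n,
        P c * ∑ d : Fin (M + 1), t d * (k * (((d : ℕ) : ℝ) - aX c) ^ 2)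
      = k * ((1 + (n : ℝ) / (A + n) ^ 2) *
              (∑ d : Fin (M + 1), ((d : ℕ) : ℝ) ^ 2 * t d)
            + (2 * A * n * c1 / (A + n) ^ 2 - 2 * A * c1 / (A + n)) *
              (∑ d : Fin (M + 1), ((d : ℕ) : ℝ) * t d)
            + ((n : ℝ) * ((n : ℝ) - 1) / (A + n) ^ 2 - 2 * n / (A + n)) *
              (∑ d : Fin (M + 1), ((d : ℕ) : ℝ) * t d) ^ 2
            + A ^ 2 * c1 ^ 2 / (A + n) ^ 2) := by
  have hAn : A + n ≠ 0 := by
    have : 0 < A := hA ▸ sum_pos (fun d _ => hα d) univ_nonempty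
    positivity
  set S : (Fin (M + 1) → ℕ) → ℝ := fun c => ∑ d : Fin (M + 1), ((d : ℕ) : ℝ) * (c d : ℝ)
  set μ₁ := ∑ d : Fin (M + 1), ((d : ℕ) : ℝ) * t d
  set μ₂ := ∑ d : Fin (M + 1), ((d : ℕ) : ℝ) ^ 2 * t d
  set p := A * c1 / (A + n)
  set q := 1 / (A + n)
  have haX' : ∀ c, aX c = p + q * S c := fun c => by
    rw [haX, hZ]
    simp only [S, p, q]
    field_simp
  have hrisk : ∀ c, P c * ∑ d, t d * (k * (((d : ℕ) : ℝ) - aX c) ^ 2) =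
      multinomialWeight t c *
        (k * (μ₂ - 2 * p * μ₁ + p ^ 2) + k * (2 * p * q - 2 * q * μ₁) * S c + k * q ^ 2 * S c ^ 2) :=
    fun c => by
      simp only [hP, mul_left_comm (t _) k, ← mul_sum, sum_mul_sub_sq t _ htsum, haX']
      rw [multinomialWeight]
      ring
  rw [← piAntidiag_univ_fin_eq_antidiagonalTuple, sum_congr rfl fun c _ => hrisk c]
  refine (multinomialExpect_quadratic htsum (fun d => ((d : ℕ) : ℝ)) n _ _ _).trans ?_
  simp only [μ₁, μ₂, p, q]
  field_simp
  ring

/-- expected posterior-action risk, conditional on `t`: for a fixed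
probability vector `t` on `{0,…,M}` and `(n₀,…,n_M) ∼ Multinomial(n, t)`, with
`Z = (1/n)∑ d·n_d` and posterior Bayes action `a_X = (α·c₁ + n·Z)/(α+n)`, the
expectation over the counts of the risk `∑ d, t_d·k·(d − a_X)²` equals the stated
closed-form expression. -/
theorem expected_risk_posterior_action_given_t (M n : ℕ) (hM : 1 ≤ M) (hn : 1 ≤ n)
    (k : ℝ) (hk : 0 < k)
    (α : Fin (M + 1) → ℝ) (hα : ∀ d, 0 < α d)
    (A c1 : ℝ) (hA : A = ∑ d, α d)
    (hc1 : c1 = (1 / A) * ∑ d : Fin (M + 1), ((d : ℕ) : ℝ) * α d)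
    (t : Fin (M + 1) → ℝ) (ht : ∀ d, 0 ≤ t d) (htsum : ∑ d, t d = 1)
    (P : (Fin (M + 1) → ℕ) → ℝ)
    (hP : ∀ c, P c = (Nat.multinomial Finset.univ c : ℝ) *
      ∏ d : Fin (M + 1), t d ^ c d)
    (Z : (Fin (M + 1) → ℕ) → ℝ)
    (hZ : ∀ c, Z c = (1 / (n : ℝ)) * ∑ d : Fin (M + 1), ((d : ℕ) : ℝ) * (c d : ℝ))
    (aX : (Fin (M + 1) → ℕ) → ℝ)
    (haX : ∀ c, aX c = (A * c1 + n * Z c) / (A + n)) :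
    ∑ c ∈ Finset.Nat.antidiagonalTuple (M + 1) n,
        P c * ∑ d : Fin (M + 1), t d * (k * (((d : ℕ) : ℝ) - aX c) ^ 2)
      = k * ((1 + (n : ℝ) / (A + n) ^ 2) *
              (∑ d : Fin (M + 1), ((d : ℕ) : ℝ) ^ 2 * t d)
            + (2 * A * n * c1 / (A + n) ^ 2 - 2 * A * c1 / (A + n)) *
              (∑ d : Fin (M + 1), ((d : ℕ) : ℝ) * t d)
            + ((n : ℝ) * ((n : ℝ) - 1) / (A + n) ^ 2 - 2 * n / (A + n)) *
              (∑ d : Fin (M + 1), ((d : ℕ) : ℝ) * t d) ^ 2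
            + A ^ 2 * c1 ^ 2 / (A + n) ^ 2) :=
  expected_risk_posterior_action_given_t_general M n hn k α hα A c1 hA t htsum P hP Z hZ aX haX
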